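/- arXiv:1710.10546 — 6 statements merged into one kernel-verified Lean document; each statement's English description precedes it below -/
import Mathlib

section
/- Under assumption (A1), the incentive function Δ_2 (associated with observation y = 2) is convex on [0,1]: for all q1, q2 ∈ [0,1] and λ ∈ [0,1], Δ_2(λ q1 + (1 − λ) q2) ≤ λ Δ_2(q1) + (1 − λ) Δ_2(q2). -/
/-- Probability of observation `y` under belief `q`, where `b1 = B_{1y}` and `b2 = B_{2y}`. -/
noncomputable def slSig (b1 b2 q : ℝ) : ℝ := b1 * (1 - q) + b2 * q

/-- Private (Bayesian posterior) belief after observation `y`. -/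
noncomputable def slEta (b1 b2 q : ℝ) : ℝ := b2 * q / slSig b1 b2 q

/-- Incentive function `Δ_y(q) = l1 + l3 - (l1 + l2) η_y(q)`. -/
noncomputable def slDelta (l1 l2 l3 b1 b2 q : ℝ) : ℝ := l1 + l3 - (l1 + l2) * slEta b1 b2 q

/-- under (A1) (TP2: `det B ≥ 0`), the incentive function `Δ_2`
(associated with observation `y = 2`, i.e. with likelihood column `(B12, B22)`)
is convex on `[0,1]`. -/
theorem stmt1
    (B11 B12 B21 B22 l1 l2 l3 : ℝ)
    (hB11 : 0 < B11) (hB12 : 0 < B12) (hB21 : 0 < B21) (hB22 : 0 < B22)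
    (hrow1 : B11 + B12 = 1) (hrow2 : B21 + B22 = 1)
    (hA1 : B11 * B22 - B12 * B21 ≥ 0)
    (hl1 : 0 < l1) (hl2 : 0 < l2) (hl3 : 0 < l3) :
    ∀ q1 ∈ Set.Icc (0:ℝ) 1, ∀ q2 ∈ Set.Icc (0:ℝ) 1, ∀ lam ∈ Set.Icc (0:ℝ) 1,
      slDelta l1 l2 l3 B12 B22 (lam * q1 + (1 - lam) * q2) ≤
        lam * slDelta l1 l2 l3 B12 B22 q1 + (1 - lam) * slDelta l1 l2 l3 B12 B22 q2 := by

  intro q1 hq1 q2 hq2 lam hlam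
  obtain ⟨hq10, hq11⟩ := hq1
  obtain ⟨hq20, hq21⟩ := hq2
  obtain ⟨hl0, hl1'⟩ := hlam
  have hB : B22 - B12 ≥ 0 := by nlinarith
  have hs1 : 0 < B12 * (1 - q1) + B22 * q1 := by nlinarith
  have hs2 : 0 < B12 * (1 - q2) + B22 * q2 := by nlinarith
  have hsl : 0 < B12 * (1 - (lam * q1 + (1 - lam) * q2)) + B22 * (lam * q1 + (1 - lam) * q2) := by
    nlinarith [mul_nonneg hl0 hs1.le, mul_nonneg (sub_nonneg.2 hl1') hs2.le]
  have key : lam * (B22 * q1 / (B12 * (1 - q1) + B22 * q1)) +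
      (1 - lam) * (B22 * q2 / (B12 * (1 - q2) + B22 * q2)) ≤
      B22 * (lam * q1 + (1 - lam) * q2) /
        (B12 * (1 - (lam * q1 + (1 - lam) * q2)) + B22 * (lam * q1 + (1 - lam) * q2)) := by
    simp only [mul_div_assoc']
    rw [div_add_div _ _ (ne_of_gt hs1) (ne_of_gt hs2), div_le_div_iff₀ (by positivity) hsl]
    nlinarith [mul_nonneg (mul_nonneg (mul_nonneg (mul_nonneg hl0 (sub_nonneg.2 hl1')) hB) hB12.le) (sq_nonneg (q1 - q2))]
  simp only [slDelta, slEta, slSig]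
  nlinarith [mul_le_mul_of_nonneg_left key (by linarith : (0:ℝ) ≤ l1 + l2)]
end

section
/- Fix a belief q ∈ [0,1] and incentive p ∈ ℝ, and write η_y = (1 − η_y(q), η_y(q)) for the private belief vector after observation y. Then the following trichotomy holds: (i) (r_1 − r_2)·η_{y=2} > 0 if and only if p < Δ_2(q); (ii) (r_1 − r_2)·η_{y=1} > 0 and (r_1 − r_2)·η_{y=2} ≤ 0 if and only if Δ_2(q) ≤ p < Δ_1(q); (iii) (r_1 − r_2)·η_{y=1} ≤ 0 if and only if p ≥ Δ_1(q). (These three conditions correspond respectively to the herding region P_3 where action a = 1 is optimal, the social learning region P_2 where a = y is optimal, and the herding region P_1 where a = 2 is optimal.) -/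
/-- The constant `l1 = (α2 + β2 B11 − β1 B12)/(δ2 − δ1)`. -/
noncomputable def slL1 (α2 β1 β2 δ1 δ2 B11 B12 : ℝ) : ℝ := (α2 + β2 * B11 - β1 * B12) / (δ2 - δ1)

/-- The constant `l2 = (α1 − β2 B21 + β1 B22)/(δ2 − δ1)`. -/
noncomputable def slL2 (α1 β1 β2 δ1 δ2 B21 B22 : ℝ) : ℝ := (α1 - β2 * B21 + β1 * B22) / (δ2 - δ1)

/-- The constant `l3 = (γ2 − γ1)/(δ2 − δ1)`. -/
noncomputable def slL3 (γ1 γ2 δ1 δ2 : ℝ) : ℝ := (γ2 - γ1) / (δ2 - δ1)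

/-- Dot product `(r_1 - r_2) · η` where `η = (1 - h, h)` and
`r(x,a) = δ_a p − α_a·1{a ≠ x} − β_a·B_{x,3−a} − γ_a`. -/
noncomputable def slRdot (α1 α2 β1 β2 γ1 γ2 δ1 δ2 B11 B12 B21 B22 p h : ℝ) : ℝ :=
  ((δ1 * p - β1 * B12 - γ1) - (δ2 * p - α2 - β2 * B11 - γ2)) * (1 - h) +
    ((δ1 * p - α1 - β1 * B22 - γ1) - (δ2 * p - β2 * B21 - γ2)) * h

/-- the trichotomy describing the three regions of the incentive `p`
at a fixed belief `q ∈ [0,1]`: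
(i) `(r_1 − r_2)·η_{y=2} > 0` iff `p < Δ_2(q)` (herding on `a = 1`);
(ii) `(r_1 − r_2)·η_{y=1} > 0 ∧ (r_1 − r_2)·η_{y=2} ≤ 0` iff `Δ_2(q) ≤ p < Δ_1(q)`
(social learning, `a = y`);
(iii) `(r_1 − r_2)·η_{y=1} ≤ 0` iff `p ≥ Δ_1(q)` (herding on `a = 2`). -/
theorem stmt6
    (α1 α2 β1 β2 γ1 γ2 δ1 δ2 B11 B12 B21 B22 p q : ℝ)
    (hα1 : α1 ∈ Set.Icc (0:ℝ) 1) (hα2 : α2 ∈ Set.Icc (0:ℝ) 1)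
    (hβ1 : β1 ∈ Set.Icc (0:ℝ) 1) (hβ2 : β2 ∈ Set.Icc (0:ℝ) 1)
    (hγ1 : γ1 ∈ Set.Icc (0:ℝ) 1) (hγ2 : γ2 ∈ Set.Icc (0:ℝ) 1)
    (hδ1 : δ1 ∈ Set.Icc (0:ℝ) 1) (hδ2 : δ2 ∈ Set.Icc (0:ℝ) 1)
    (hδ : δ1 < δ2)
    (hB11 : 0 < B11) (hB12 : 0 < B12) (hB21 : 0 < B21) (hB22 : 0 < B22)
    (hrow1 : B11 + B12 = 1) (hrow2 : B21 + B22 = 1)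
    (hq : q ∈ Set.Icc (0:ℝ) 1) :
    (0 < slRdot α1 α2 β1 β2 γ1 γ2 δ1 δ2 B11 B12 B21 B22 p (slEta B12 B22 q) ↔
      p < slDelta (slL1 α2 β1 β2 δ1 δ2 B11 B12) (slL2 α1 β1 β2 δ1 δ2 B21 B22)
            (slL3 γ1 γ2 δ1 δ2) B12 B22 q) ∧
    ((0 < slRdot α1 α2 β1 β2 γ1 γ2 δ1 δ2 B11 B12 B21 B22 p (slEta B11 B21 q) ∧
        slRdot α1 α2 β1 β2 γ1 γ2 δ1 δ2 B11 B12 B21 B22 p (slEta B12 B22 q) ≤ 0) ↔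
      (slDelta (slL1 α2 β1 β2 δ1 δ2 B11 B12) (slL2 α1 β1 β2 δ1 δ2 B21 B22)
          (slL3 γ1 γ2 δ1 δ2) B12 B22 q ≤ p ∧
        p < slDelta (slL1 α2 β1 β2 δ1 δ2 B11 B12) (slL2 α1 β1 β2 δ1 δ2 B21 B22)
            (slL3 γ1 γ2 δ1 δ2) B11 B21 q)) ∧
    (slRdot α1 α2 β1 β2 γ1 γ2 δ1 δ2 B11 B12 B21 B22 p (slEta B11 B21 q) ≤ 0 ↔
      slDelta (slL1 α2 β1 β2 δ1 δ2 B11 B12) (slL2 α1 β1 β2 δ1 δ2 B21 B22)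
          (slL3 γ1 γ2 δ1 δ2) B11 B21 q ≤ p) := by
  have hd : δ2 - δ1 ≠ 0 := by linarith
  have hdpos : 0 < δ2 - δ1 := by linarith
  have key : ∀ h : ℝ, slRdot α1 α2 β1 β2 γ1 γ2 δ1 δ2 B11 B12 B21 B22 p h =
      (δ2 - δ1) * (((slL1 α2 β1 β2 δ1 δ2 B11 B12) + (slL3 γ1 γ2 δ1 δ2) -
        ((slL1 α2 β1 β2 δ1 δ2 B11 B12) + (slL2 α1 β1 β2 δ1 δ2 B21 B22)) * h) - p) := by
    intro h
    unfold slRdot slL1 slL2 slL3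
    field_simp
    ring
  have iff1 : ∀ h : ℝ, (0 < slRdot α1 α2 β1 β2 γ1 γ2 δ1 δ2 B11 B12 B21 B22 p h ↔
      p < (slL1 α2 β1 β2 δ1 δ2 B11 B12) + (slL3 γ1 γ2 δ1 δ2) -
        ((slL1 α2 β1 β2 δ1 δ2 B11 B12) + (slL2 α1 β1 β2 δ1 δ2 B21 B22)) * h) := by
    intro h
    rw [key h]
    constructor
    · intro hp
      nlinarith
    · intro hp
      have : 0 < (((slL1 α2 β1 β2 δ1 δ2 B11 B12) + (slL3 γ1 γ2 δ1 δ2) -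
        ((slL1 α2 β1 β2 δ1 δ2 B11 B12) + (slL2 α1 β1 β2 δ1 δ2 B21 B22)) * h) - p) := by linarith
      positivity
  have iff2 : ∀ h : ℝ, (slRdot α1 α2 β1 β2 γ1 γ2 δ1 δ2 B11 B12 B21 B22 p h ≤ 0 ↔
      (slL1 α2 β1 β2 δ1 δ2 B11 B12) + (slL3 γ1 γ2 δ1 δ2) -
        ((slL1 α2 β1 β2 δ1 δ2 B11 B12) + (slL2 α1 β1 β2 δ1 δ2 B21 B22)) * h ≤ p) := by
    intro h
    rw [← not_iff_not, not_le, not_le, iff1 h]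
  refine ⟨?_, ?_, ?_⟩
  · simpa [slDelta] using iff1 (slEta B12 B22 q)
  · constructor
    · rintro ⟨h1, h2⟩
      exact ⟨by simpa [slDelta] using (iff2 (slEta B12 B22 q)).mp h2,
        by simpa [slDelta] using (iff1 (slEta B11 B21 q)).mp h1⟩
    · rintro ⟨h1, h2⟩
      exact ⟨by simpa [slDelta] using (iff1 (slEta B11 B21 q)).mpr (by simpa [slDelta] using h2),
        by simpa [slDelta] using (iff2 (slEta B12 B22 q)).mpr (by simpa [slDelta] using h1)⟩
  · simpa [slDelta] using iff2 (slEta B11 B21 q)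
end

section
/- Fix a belief q ∈ [0,1] and an incentive p with Δ_2(q) ≤ p < Δ_1(q) (the social learning region). Define the sensor's myopically optimal action after observation y as a(y) = 1 if (r_1 − r_2)·η_y > 0 and a(y) = 2 otherwise, where η_y = (1 − η_y(q), η_y(q)). Then a(y) = y for both y = 1, 2; consequently the induced action likelihoods P(a | x = i) = Σ_y 1{a(y) = a} B_{iy} satisfy P(a | x = i) = B_{ia} for all i, a ∈ {1,2}, i.e. the decision likelihood matrix R^π equals B. -/
/-- Observation matrix entry `B_{iy}` for `i, y ∈ {1, 2}`. -/
noncomputable def slBm (B11 B12 B21 B22 : ℝ) (i y : ℕ) : ℝ :=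
  if i = 1 then (if y = 1 then B11 else B12) else (if y = 1 then B21 else B22)

/-- The sensor's myopically optimal action after observation `y`:
`a(y) = 1` if `(r_1 − r_2)·η_y > 0`, and `a(y) = 2` otherwise, where
`η_y = (1 − η_y(q), η_y(q))`. -/
noncomputable def slAct (α1 α2 β1 β2 γ1 γ2 δ1 δ2 B11 B12 B21 B22 q p : ℝ) (y : ℕ) : ℕ :=
  if 0 < slRdot α1 α2 β1 β2 γ1 γ2 δ1 δ2 B11 B12 B21 B22 p
      (slEta (slBm B11 B12 B21 B22 1 y) (slBm B11 B12 B21 B22 2 y) q) then 1 else 2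


lemma slRdot_factor (α1 α2 β1 β2 γ1 γ2 δ1 δ2 B11 B12 B21 B22 p h : ℝ) (hδ : δ1 < δ2) :
    slRdot α1 α2 β1 β2 γ1 γ2 δ1 δ2 B11 B12 B21 B22 p h =
      (δ2 - δ1) * (slL1 α2 β1 β2 δ1 δ2 B11 B12 + slL3 γ1 γ2 δ1 δ2
        - (slL1 α2 β1 β2 δ1 δ2 B11 B12 + slL2 α1 β1 β2 δ1 δ2 B21 B22) * h - p) := by
  have h0 : δ2 - δ1 ≠ 0 := sub_ne_zero.mpr hδ.ne'
  unfold slRdot slL1 slL2 slL3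
  field_simp
  ring

/-- in the social learning region `Δ_2(q) ≤ p < Δ_1(q)`, the myopically
optimal action equals the observation, `a(y) = y` for `y = 1, 2`; consequently the
induced action likelihoods `P(a | x = i) = Σ_y 1{a(y) = a} B_{iy}` coincide with the
observation likelihoods: `P(a | x = i) = B_{ia}` for all `i, a ∈ {1,2}`,
i.e. the decision likelihood matrix `R^π` equals `B`. -/
theorem stmt7
    (α1 α2 β1 β2 γ1 γ2 δ1 δ2 B11 B12 B21 B22 q p : ℝ)
    (hα1 : α1 ∈ Set.Icc (0:ℝ) 1) (hα2 : α2 ∈ Set.Icc (0:ℝ) 1)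
    (hβ1 : β1 ∈ Set.Icc (0:ℝ) 1) (hβ2 : β2 ∈ Set.Icc (0:ℝ) 1)
    (hγ1 : γ1 ∈ Set.Icc (0:ℝ) 1) (hγ2 : γ2 ∈ Set.Icc (0:ℝ) 1)
    (hδ1 : δ1 ∈ Set.Icc (0:ℝ) 1) (hδ2 : δ2 ∈ Set.Icc (0:ℝ) 1)
    (hδ : δ1 < δ2)
    (hB11 : 0 < B11) (hB12 : 0 < B12) (hB21 : 0 < B21) (hB22 : 0 < B22)
    (hrow1 : B11 + B12 = 1) (hrow2 : B21 + B22 = 1)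
    (hq : q ∈ Set.Icc (0:ℝ) 1)
    (hp1 : slDelta (slL1 α2 β1 β2 δ1 δ2 B11 B12) (slL2 α1 β1 β2 δ1 δ2 B21 B22)
        (slL3 γ1 γ2 δ1 δ2) B12 B22 q ≤ p)
    (hp2 : p < slDelta (slL1 α2 β1 β2 δ1 δ2 B11 B12) (slL2 α1 β1 β2 δ1 δ2 B21 B22)
        (slL3 γ1 γ2 δ1 δ2) B11 B21 q) :
    (slAct α1 α2 β1 β2 γ1 γ2 δ1 δ2 B11 B12 B21 B22 q p 1 = 1 ∧
      slAct α1 α2 β1 β2 γ1 γ2 δ1 δ2 B11 B12 B21 B22 q p 2 = 2) ∧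
    (∀ i ∈ ({1, 2} : Set ℕ), ∀ a ∈ ({1, 2} : Set ℕ),
      (if slAct α1 α2 β1 β2 γ1 γ2 δ1 δ2 B11 B12 B21 B22 q p 1 = a then (1:ℝ) else 0) *
          slBm B11 B12 B21 B22 i 1 +
        (if slAct α1 α2 β1 β2 γ1 γ2 δ1 δ2 B11 B12 B21 B22 q p 2 = a then (1:ℝ) else 0) *
          slBm B11 B12 B21 B22 i 2 = slBm B11 B12 B21 B22 i a) := by
  have hd : (0:ℝ) < δ2 - δ1 := sub_pos.mpr hδ
  have e1 : slBm B11 B12 B21 B22 1 1 = B11 := by simp [slBm]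
  have e2 : slBm B11 B12 B21 B22 2 1 = B21 := by simp [slBm]
  have e3 : slBm B11 B12 B21 B22 1 2 = B12 := by simp [slBm]
  have e4 : slBm B11 B12 B21 B22 2 2 = B22 := by simp [slBm]
  have ha1 : slAct α1 α2 β1 β2 γ1 γ2 δ1 δ2 B11 B12 B21 B22 q p 1 = 1 := by
    unfold slAct
    rw [e1, e2, slRdot_factor _ _ _ _ _ _ _ _ _ _ _ _ _ _ hδ, if_pos]
    apply mul_pos hd
    unfold slDelta at hp2
    linarith
  have ha2 : slAct α1 α2 β1 β2 γ1 γ2 δ1 δ2 B11 B12 B21 B22 q p 2 = 2 := by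
    unfold slAct
    rw [e3, e4, slRdot_factor _ _ _ _ _ _ _ _ _ _ _ _ _ _ hδ, if_neg]
    unfold slDelta at hp1
    nlinarith
  refine ⟨⟨ha1, ha2⟩, ?_⟩
  intro i hi a ha
  rw [ha1, ha2]
  rcases hi with hi | hi <;> rcases ha with ha | ha <;> subst hi <;> subst ha <;>
    simp [slBm]
end

section
/- Sub-martingale property of the incentive (one-step form): under assumption (A1), for every q ∈ [0,1], σ_1(q) Δ_2(η_1(q)) + σ_2(q) Δ_2(η_2(q)) ≥ Δ_2(q); i.e., when sensors act informatively, the expected value of the incentive Δ_2 evaluated at the updated public belief is at least its current value, so the incentive sequence increases on average. -/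
/-- A convex combination of two positive numbers is positive. -/
lemma slSig_pos' (b1 b2 q : ℝ) (h1 : 0 < b1) (h2 : 0 < b2) (hq0 : 0 ≤ q) (hq1 : q ≤ 1) :
    0 < b1 * (1 - q) + b2 * q := by
  rcases le_total b1 b2 with h | h
  · nlinarith
  · nlinarith

/-- Key super-martingale property of the posterior belief `η_2`. -/
lemma slEta_key (B11 B12 B21 B22 q : ℝ)
    (hB11 : 0 < B11) (hB12 : 0 < B12) (hB21 : 0 < B21) (hB22 : 0 < B22)
    (hrow1 : B11 + B12 = 1) (hrow2 : B21 + B22 = 1)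
    (hA1 : B11 * B22 - B12 * B21 ≥ 0) (hq0 : 0 ≤ q) (hq1 : q ≤ 1) :
    slSig B11 B21 q * slEta B12 B22 (slEta B11 B21 q) +
      slSig B12 B22 q * slEta B12 B22 (slEta B12 B22 q) ≤ slEta B12 B22 q := by
  have h11 : B11 = 1 - B12 := by linarith
  have h21 : B21 = 1 - B22 := by linarith
  subst h11 h21
  have hd : B12 ≤ B22 := by nlinarith
  have hs1 : 0 < (1 - B12) * (1 - q) + (1 - B22) * q := slSig_pos' _ _ _ hB11 hB21 hq0 hq1
  have hs2 : 0 < B12 * (1 - q) + B22 * q := slSig_pos' _ _ _ hB12 hB22 hq0 hq1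
  have hD1 : 0 < ((1 - B12) * B12) * (1 - q) + ((1 - B22) * B22) * q :=
    slSig_pos' _ _ _ (mul_pos hB11 hB12) (mul_pos hB21 hB22) hq0 hq1
  have hD2 : 0 < (B12 * B12) * (1 - q) + (B22 * B22) * q :=
    slSig_pos' _ _ _ (mul_pos hB12 hB12) (mul_pos hB22 hB22) hq0 hq1
  have e1 : slEta B12 B22 (slEta (1 - B12) (1 - B22) q) =
      (1 - B22) * B22 * q / (((1 - B12) * B12) * (1 - q) + ((1 - B22) * B22) * q) := by
    unfold slEta slSig
    rw [div_eq_div_iff _ hD1.ne']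
    · field_simp
      ring
    · have ht : (B12 * (1 - (1 - B22) * q / ((1 - B12) * (1 - q) + (1 - B22) * q)) +
          B22 * ((1 - B22) * q / ((1 - B12) * (1 - q) + (1 - B22) * q))) *
          ((1 - B12) * (1 - q) + (1 - B22) * q) =
          ((1 - B12) * B12) * (1 - q) + ((1 - B22) * B22) * q := by
        field_simp
        ring
      intro h0
      rw [h0, zero_mul] at ht
      linarith
  have e2 : slEta B12 B22 (slEta B12 B22 q) =
      B22 * B22 * q / ((B12 * B12) * (1 - q) + (B22 * B22) * q) := by
    unfold slEta slSig
    rw [div_eq_div_iff _ hD2.ne']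
    · field_simp
      ring
    · have ht : (B12 * (1 - B22 * q / (B12 * (1 - q) + B22 * q)) +
          B22 * (B22 * q / (B12 * (1 - q) + B22 * q))) *
          (B12 * (1 - q) + B22 * q) =
          (B12 * B12) * (1 - q) + (B22 * B22) * q := by
        field_simp
        ring
      intro h0
      rw [h0, zero_mul] at ht
      linarith
  rw [e1, e2]
  unfold slEta slSig
  rw [mul_div_assoc', mul_div_assoc', div_add_div _ _ hD1.ne' hD2.ne',
    div_le_div_iff₀ (mul_pos hD1 hD2) hs2]
  have hnn : 0 ≤ B22 * q ^ 2 * (1 - q) ^ 2 * B12 * (B22 - B12) ^ 3 := by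
    have := pow_nonneg (sub_nonneg.2 hd) 3
    positivity
  nlinarith [hnn, sq_nonneg (q * (1 - q))]

/-- one-step sub-martingale property of the incentive: under (A1), for every
`q ∈ [0,1]`, `σ_1(q) Δ_2(η_1(q)) + σ_2(q) Δ_2(η_2(q)) ≥ Δ_2(q)`: the expected value of the
incentive `Δ_2` at the updated public belief is at least its current value. -/
theorem stmt9
    (B11 B12 B21 B22 l1 l2 l3 : ℝ)
    (hB11 : 0 < B11) (hB12 : 0 < B12) (hB21 : 0 < B21) (hB22 : 0 < B22)
    (hrow1 : B11 + B12 = 1) (hrow2 : B21 + B22 = 1)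
    (hA1 : B11 * B22 - B12 * B21 ≥ 0)
    (hl1 : 0 < l1) (hl2 : 0 < l2) (hl3 : 0 < l3) :
    ∀ q ∈ Set.Icc (0:ℝ) 1,
      slDelta l1 l2 l3 B12 B22 q ≤
        slSig B11 B21 q * slDelta l1 l2 l3 B12 B22 (slEta B11 B21 q) +
          slSig B12 B22 q * slDelta l1 l2 l3 B12 B22 (slEta B12 B22 q) := by
  intro q hq
  obtain ⟨hq0, hq1⟩ := hq
  have key := slEta_key B11 B12 B21 B22 q hB11 hB12 hB21 hB22 hrow1 hrow2 hA1 hq0 hq1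
  have hsum : slSig B11 B21 q + slSig B12 B22 q = 1 := by
    unfold slSig
    linear_combination (1 - q) * hrow1 + q * hrow2
  have hK : (0:ℝ) ≤ l1 + l2 := by linarith
  have hm := mul_le_mul_of_nonneg_left key hK
  have h2 : (slSig B11 B21 q + slSig B12 B22 q) * (l1 + l3) = l1 + l3 := by
    rw [hsum]; ring
  unfold slDelta
  nlinarith [hm, h2]
end

section
/- The Bellman operator T maps bounded functions on [0,1] to bounded functions, maps continuous functions to continuous functions, and is a contraction with Lipschitz constant ρ with respect to the supremum norm; hence T has a unique bounded fixed point V, which is continuous. Moreover, under assumption (A1) and l1, l2, l3 > 0, the fixed point V is nonincreasing on [0,1]: q1 ≤ q2 implies V(q1) ≥ V(q2). -/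
/-- The Bellman operator of the fusion center:
`(T V)(q) = min{0, Δ_2(q) − φ + ρ(σ_1(q) V(η_1(q)) + σ_2(q) V(η_2(q)))}`. -/
noncomputable def slT (B11 B12 B21 B22 l1 l2 l3 φ ρ : ℝ) (V : ℝ → ℝ) (q : ℝ) : ℝ :=
  min 0 (slDelta l1 l2 l3 B12 B22 q - φ +
    ρ * (slSig B11 B21 q * V (slEta B11 B21 q) + slSig B12 B22 q * V (slEta B12 B22 q)))

open Set Filter Topology

def SupLipschitzOn {α : Type*} (s : Set α) (ρ : ℝ) (T : (α → ℝ) → α → ℝ) : Prop :=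
  ∀ V W : α → ℝ, ∀ C : ℝ, (∀ q ∈ s, |V q - W q| ≤ C) → ∀ q ∈ s, |T V q - T W q| ≤ ρ * C

namespace SupLipschitzOn

variable {α : Type*} {s : Set α} {ρ : ℝ} {T : (α → ℝ) → α → ℝ}

theorem exists_bound (hT : SupLipschitzOn s ρ T) (hT0 : ∃ K, ∀ q ∈ s, |T 0 q| ≤ K)
    {V : α → ℝ} (hV : ∃ M, ∀ q ∈ s, |V q| ≤ M) : ∃ M, ∀ q ∈ s, |T V q| ≤ M := by
  obtain ⟨K, hK⟩ := hT0
  obtain ⟨M, hM⟩ := hV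
  refine ⟨K + ρ * M, fun q hq => ?_⟩
  have hVq := hT V 0 M (by simpa using hM) q hq
  linarith [abs_sub_abs_le_abs_sub (T V q) (T 0 q), hK q hq]

theorem eqOn_of_isFixedPt (hT : SupLipschitzOn s ρ T) (hρ0 : 0 ≤ ρ) (hρ1 : ρ < 1)
    {V W : α → ℝ} (hV : ∃ M, ∀ q ∈ s, |V q| ≤ M) (hW : ∃ M, ∀ q ∈ s, |W q| ≤ M)
    (hVfix : EqOn (T V) V s) (hWfix : EqOn (T W) W s) : EqOn V W s := by
  obtain ⟨MV, hMV⟩ := hV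
  obtain ⟨MW, hMW⟩ := hW
  have hpow (n : ℕ) : ∀ q ∈ s, |V q - W q| ≤ ρ ^ n * (MV + MW) := by
    induction n with
    | zero =>
      intro q hq
      rw [pow_zero, one_mul]
      exact (abs_sub _ _).trans (add_le_add (hMV q hq) (hMW q hq))
    | succ n ih =>
      intro q hq
      rw [pow_succ', mul_assoc, ← hVfix hq, ← hWfix hq]
      exact hT V W _ ih q hq
  intro q hq
  have hlim : Tendsto (fun n : ℕ => ρ ^ n * (MV + MW)) atTop (𝓝 0) := by
    simpa using (tendsto_pow_atTop_nhds_zero_of_lt_one hρ0 hρ1).mul_const (MV + MW)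
  exact sub_eq_zero.1 (abs_nonpos_iff.1 (ge_of_tendsto' hlim fun n => hpow n q hq))

theorem exists_continuous_antitone_fixedPoint {a b : ℝ} {T : (ℝ → ℝ) → ℝ → ℝ}
    (hT : SupLipschitzOn (Icc a b) ρ T) (hab : a ≤ b) (hρ0 : 0 ≤ ρ) (hρ1 : ρ < 1)
    (hcont : ∀ V, ContinuousOn V (Icc a b) → ContinuousOn (T V) (Icc a b))
    (hanti : ∀ V, AntitoneOn V (Icc a b) → AntitoneOn (T V) (Icc a b)) :
    ∃ V : ℝ → ℝ, Continuous V ∧ Antitone V ∧ EqOn (T V) V (Icc a b) := by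
  let Tc : C(Icc a b, ℝ) → C(Icc a b, ℝ) := fun f =>
    ⟨(Icc a b).domRestrict (T (IccExtend hab f)),
      (hcont _ f.continuous.Icc_extend'.continuousOn).domRestrict⟩
  have hTc : ContractingWith ⟨ρ, hρ0⟩ Tc := by
    refine ⟨by exact_mod_cast hρ1, LipschitzWith.of_dist_le_mul fun f g => ?_⟩
    refine (ContinuousMap.dist_le (by positivity)).2 fun x => hT _ _ _ (fun q hq => ?_) x x.2
    rw [IccExtend_of_mem hab f hq, IccExtend_of_mem hab g hq, ← Real.dist_eq]
    exact ContinuousMap.dist_apply_le_dist _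
  have hmaps : MapsTo Tc {f | Antitone f} {f | Antitone f} := fun f hf x y hxy =>
    hanti _ ((hf.comp_monotone (monotone_projIcc hab)).antitoneOn _) x.2 y.2 hxy
  have hclosed : IsClosed {f : C(Icc a b, ℝ) | Antitone f} :=
    isClosed_antitone.preimage continuous_coeFun
  obtain ⟨f, hf, hfix, -⟩ := ContractingWith.exists_fixedPoint' hclosed.isComplete hmaps
    (hTc.restrict hmaps) (x := 0) antitone_const (edist_ne_top _ _)
  refine ⟨IccExtend hab f, f.continuous.Icc_extend', hf.comp_monotone (monotone_projIcc hab),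
    fun q hq => ?_⟩
  rw [IccExtend_of_mem hab f hq]
  exact congrArg (· ⟨q, hq⟩) hfix

end SupLipschitzOn

section Belief

variable {b1 b2 q : ℝ}

theorem slSig_pos (hb1 : 0 < b1) (hb2 : 0 < b2) (hq : q ∈ Icc (0 : ℝ) 1) : 0 < slSig b1 b2 q := by
  unfold slSig
  rcases hq with ⟨h0, h1⟩
  rcases h1.lt_or_eq with h1 | rfl
  · nlinarith
  · linarith

theorem slSig_add_slSig {B11 B12 B21 B22 : ℝ} (hrow1 : B11 + B12 = 1) (hrow2 : B21 + B22 = 1)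
    (q : ℝ) : slSig B11 B21 q + slSig B12 B22 q = 1 := by
  unfold slSig; linear_combination (1 - q) * hrow1 + q * hrow2

theorem antitone_slSig (h : b2 ≤ b1) : Antitone (slSig b1 b2) := fun q q' hqq' => by
  unfold slSig; nlinarith

theorem mapsTo_slEta (hb1 : 0 < b1) (hb2 : 0 < b2) :
    MapsTo (slEta b1 b2) (Icc 0 1) (Icc 0 1) := fun q hq => by
  have hσ := slSig_pos hb1 hb2 hq
  refine ⟨div_nonneg (mul_nonneg hb2.le hq.1) hσ.le, (div_le_one hσ).2 ?_⟩
  unfold slSig; nlinarith [hq.2]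

theorem monotoneOn_slEta (hb1 : 0 < b1) (hb2 : 0 < b2) : MonotoneOn (slEta b1 b2) (Icc 0 1) :=
  fun q hq q' hq' hqq' => by
  rw [slEta, slEta, div_le_div_iff₀ (slSig_pos hb1 hb2 hq) (slSig_pos hb1 hb2 hq')]
  unfold slSig
  nlinarith [mul_nonneg (mul_nonneg hb1.le hb2.le) (sub_nonneg.2 hqq')]

theorem continuousOn_slEta (hb1 : 0 < b1) (hb2 : 0 < b2) :
    ContinuousOn (slEta b1 b2) (Icc 0 1) :=
  ContinuousOn.div (by fun_prop) (by unfold slSig; fun_prop)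
    fun _ hq => (slSig_pos hb1 hb2 hq).ne'

theorem slEta_le_slEta {B11 B12 B21 B22 : ℝ} (hB11 : 0 < B11) (hB12 : 0 < B12) (hB21 : 0 < B21)
    (hB22 : 0 < B22) (hA1 : B11 * B22 - B12 * B21 ≥ 0) (hq : q ∈ Icc (0 : ℝ) 1) :
    slEta B11 B21 q ≤ slEta B12 B22 q := by
  rw [slEta, slEta, div_le_div_iff₀ (slSig_pos hB11 hB21 hq) (slSig_pos hB12 hB22 hq)]
  unfold slSig
  nlinarith [mul_nonneg (mul_nonneg hq.1 (sub_nonneg.2 hq.2)) hA1]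

end Belief

theorem abs_add_mul_le_of_add_eq_one {s t a b C : ℝ} (hs : 0 ≤ s) (ht : 0 ≤ t) (hst : s + t = 1)
    (ha : |a| ≤ C) (hb : |b| ≤ C) : |s * a + t * b| ≤ C :=
  calc |s * a + t * b| ≤ s * |a| + t * |b| := by
        refine (abs_add_le _ _).trans_eq ?_
        rw [abs_mul, abs_mul, abs_of_nonneg hs, abs_of_nonneg ht]
    _ ≤ s * C + t * C := by gcongr
    _ = C := by rw [← add_mul, hst, one_mul]

noncomputable def slExpect (B11 B12 B21 B22 : ℝ) (V : ℝ → ℝ) (q : ℝ) : ℝ :=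
  slSig B11 B21 q * V (slEta B11 B21 q) + slSig B12 B22 q * V (slEta B12 B22 q)

section Bellman

variable {B11 B12 B21 B22 l1 l2 l3 φ ρ : ℝ} {V W : ℝ → ℝ} {q : ℝ}

theorem slT_eq : slT B11 B12 B21 B22 l1 l2 l3 φ ρ V q =
    min 0 (slDelta l1 l2 l3 B12 B22 q - φ + ρ * slExpect B11 B12 B21 B22 V q) :=
  rfl

theorem abs_slExpect_sub_le (hB11 : 0 < B11) (hB12 : 0 < B12) (hB21 : 0 < B21) (hB22 : 0 < B22)
    (hrow1 : B11 + B12 = 1) (hrow2 : B21 + B22 = 1) {C : ℝ}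
    (hC : ∀ q ∈ Icc (0 : ℝ) 1, |V q - W q| ≤ C) (hq : q ∈ Icc (0 : ℝ) 1) :
    |slExpect B11 B12 B21 B22 V q - slExpect B11 B12 B21 B22 W q| ≤ C := by
  have hdiff : slExpect B11 B12 B21 B22 V q - slExpect B11 B12 B21 B22 W q =
      slSig B11 B21 q * (V (slEta B11 B21 q) - W (slEta B11 B21 q)) +
        slSig B12 B22 q * (V (slEta B12 B22 q) - W (slEta B12 B22 q)) := by
    unfold slExpect; ring
  rw [hdiff]
  exact abs_add_mul_le_of_add_eq_one (slSig_pos hB11 hB21 hq).le (slSig_pos hB12 hB22 hq).le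
    (slSig_add_slSig hrow1 hrow2 q) (hC _ (mapsTo_slEta hB11 hB21 hq))
    (hC _ (mapsTo_slEta hB12 hB22 hq))

theorem continuousOn_slExpect (hB11 : 0 < B11) (hB12 : 0 < B12) (hB21 : 0 < B21)
    (hB22 : 0 < B22) (hV : ContinuousOn V (Icc 0 1)) :
    ContinuousOn (slExpect B11 B12 B21 B22 V) (Icc 0 1) := by
  have hV1 : ContinuousOn (fun q => V (slEta B11 B21 q)) (Icc 0 1) :=
    hV.comp (continuousOn_slEta hB11 hB21) (mapsTo_slEta hB11 hB21)
  have hV2 : ContinuousOn (fun q => V (slEta B12 B22 q)) (Icc 0 1) :=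
    hV.comp (continuousOn_slEta hB12 hB22) (mapsTo_slEta hB12 hB22)
  have hσ (b1 b2 : ℝ) : Continuous (slSig b1 b2) := by unfold slSig; fun_prop
  exact ((hσ _ _).continuousOn.mul hV1).add ((hσ _ _).continuousOn.mul hV2)

theorem antitoneOn_slExpect (hB11 : 0 < B11) (hB12 : 0 < B12) (hB21 : 0 < B21) (hB22 : 0 < B22)
    (hrow1 : B11 + B12 = 1) (hrow2 : B21 + B22 = 1) (hA1 : B11 * B22 - B12 * B21 ≥ 0)
    (hV : AntitoneOn V (Icc 0 1)) : AntitoneOn (slExpect B11 B12 B21 B22 V) (Icc 0 1) := by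
  intro q hq q' hq' hqq'
  have hη1 := mapsTo_slEta hB11 hB21
  have hη2 := mapsTo_slEta hB12 hB22
  have hV1 : V (slEta B11 B21 q') ≤ V (slEta B11 B21 q) :=
    hV (hη1 hq) (hη1 hq') (monotoneOn_slEta hB11 hB21 hq hq' hqq')
  have hV2 : V (slEta B12 B22 q') ≤ V (slEta B12 B22 q) :=
    hV (hη2 hq) (hη2 hq') (monotoneOn_slEta hB12 hB22 hq hq' hqq')
  have hV12 : V (slEta B12 B22 q) ≤ V (slEta B11 B21 q) :=
    hV (hη1 hq) (hη2 hq) (slEta_le_slEta hB11 hB12 hB21 hB22 hA1 hq)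
  -- for stochastic rows, (A1) says `B21 ≤ B11`
  have hσ : slSig B11 B21 q' ≤ slSig B11 B21 q :=
    antitone_slSig (by linear_combination hA1 - B21 * hrow1 + B11 * hrow2) hqq'
  have hσ1 := (slSig_pos hB11 hB21 hq').le
  have hσ2 := (slSig_pos hB12 hB22 hq').le
  have hsum := slSig_add_slSig hrow1 hrow2 q
  have hsum' := slSig_add_slSig hrow1 hrow2 q'
  unfold slExpect
  linear_combination mul_le_mul_of_nonneg_left hV1 hσ1 + mul_le_mul_of_nonneg_left hV2 hσ2 +
    mul_nonneg (sub_nonneg.2 hσ) (sub_nonneg.2 hV12) + V (slEta B12 B22 q) * (hsum' - hsum)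

theorem supLipschitzOn_slT (hB11 : 0 < B11) (hB12 : 0 < B12) (hB21 : 0 < B21) (hB22 : 0 < B22)
    (hrow1 : B11 + B12 = 1) (hrow2 : B21 + B22 = 1) (hρ0 : 0 ≤ ρ) :
    SupLipschitzOn (Icc 0 1) ρ (slT B11 B12 B21 B22 l1 l2 l3 φ ρ) := by
  intro V W C hC q hq
  rw [slT_eq, slT_eq]
  refine (abs_min_sub_min_le_max _ _ _ _).trans ?_
  rw [sub_self, abs_zero, add_sub_add_left_eq_sub, ← mul_sub, abs_mul, abs_of_nonneg hρ0]
  exact max_le (mul_nonneg hρ0 ((abs_nonneg _).trans (hC q hq)))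
    (mul_le_mul_of_nonneg_left (abs_slExpect_sub_le hB11 hB12 hB21 hB22 hrow1 hrow2 hC hq) hρ0)

theorem continuousOn_slT (hB11 : 0 < B11) (hB12 : 0 < B12) (hB21 : 0 < B21) (hB22 : 0 < B22)
    (hV : ContinuousOn V (Icc 0 1)) :
    ContinuousOn (slT B11 B12 B21 B22 l1 l2 l3 φ ρ V) (Icc 0 1) := by
  have hΔ : ContinuousOn (slDelta l1 l2 l3 B12 B22) (Icc 0 1) :=
    continuousOn_const.sub (continuousOn_const.mul (continuousOn_slEta hB12 hB22))
  have hE := continuousOn_slExpect hB11 hB12 hB21 hB22 hV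
  exact continuousOn_const.inf ((hΔ.sub continuousOn_const).add (continuousOn_const.mul hE))

theorem antitoneOn_slT (hB11 : 0 < B11) (hB12 : 0 < B12) (hB21 : 0 < B21) (hB22 : 0 < B22)
    (hrow1 : B11 + B12 = 1) (hrow2 : B21 + B22 = 1) (hA1 : B11 * B22 - B12 * B21 ≥ 0)
    (hl : 0 ≤ l1 + l2) (hρ0 : 0 ≤ ρ) (hV : AntitoneOn V (Icc 0 1)) :
    AntitoneOn (slT B11 B12 B21 B22 l1 l2 l3 φ ρ V) (Icc 0 1) := by
  intro q hq q' hq' hqq'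
  have hΔ : slDelta l1 l2 l3 B12 B22 q' ≤ slDelta l1 l2 l3 B12 B22 q := by
    unfold slDelta
    linarith [mul_le_mul_of_nonneg_left (monotoneOn_slEta hB12 hB22 hq hq' hqq') hl]
  have hE := antitoneOn_slExpect hB11 hB12 hB21 hB22 hrow1 hrow2 hA1 hV hq hq' hqq'
  rw [slT_eq, slT_eq]
  gcongr

end Bellman

theorem stmt11_general
    (B11 B12 B21 B22 l1 l2 l3 φ ρ : ℝ)
    (hB11 : 0 < B11) (hB12 : 0 < B12) (hB21 : 0 < B21) (hB22 : 0 < B22)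
    (hrow1 : B11 + B12 = 1) (hrow2 : B21 + B22 = 1)
    (hA1 : B11 * B22 - B12 * B21 ≥ 0)
    (hl1 : 0 < l1) (hl2 : 0 < l2)
    (hρ0 : 0 ≤ ρ) (hρ1 : ρ < 1) :
    -- bounded to bounded
    (∀ V : ℝ → ℝ, (∃ M, ∀ q ∈ Set.Icc (0:ℝ) 1, |V q| ≤ M) →
      ∃ M, ∀ q ∈ Set.Icc (0:ℝ) 1, |slT B11 B12 B21 B22 l1 l2 l3 φ ρ V q| ≤ M) ∧
    -- continuous to continuous
    (∀ V : ℝ → ℝ, ContinuousOn V (Set.Icc (0:ℝ) 1) →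
      ContinuousOn (slT B11 B12 B21 B22 l1 l2 l3 φ ρ V) (Set.Icc (0:ℝ) 1)) ∧
    -- contraction with Lipschitz constant ρ in the sup norm over [0,1]
    (∀ V W : ℝ → ℝ, ∀ C : ℝ, (∀ q ∈ Set.Icc (0:ℝ) 1, |V q - W q| ≤ C) →
      ∀ q ∈ Set.Icc (0:ℝ) 1,
        |slT B11 B12 B21 B22 l1 l2 l3 φ ρ V q - slT B11 B12 B21 B22 l1 l2 l3 φ ρ W q| ≤ ρ * C) ∧
    -- existence of a bounded fixed point, unique among bounded functions, continuous,
    -- and nonincreasing on [0,1]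
    (∃ V : ℝ → ℝ,
      (∃ M, ∀ q ∈ Set.Icc (0:ℝ) 1, |V q| ≤ M) ∧
      (∀ q ∈ Set.Icc (0:ℝ) 1, slT B11 B12 B21 B22 l1 l2 l3 φ ρ V q = V q) ∧
      (∀ W : ℝ → ℝ, (∃ M, ∀ q ∈ Set.Icc (0:ℝ) 1, |W q| ≤ M) →
        (∀ q ∈ Set.Icc (0:ℝ) 1, slT B11 B12 B21 B22 l1 l2 l3 φ ρ W q = W q) →
        ∀ q ∈ Set.Icc (0:ℝ) 1, W q = V q) ∧
      ContinuousOn V (Set.Icc (0:ℝ) 1) ∧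
      (∀ q1 q2 : ℝ, 0 ≤ q1 → q1 ≤ q2 → q2 ≤ 1 → V q2 ≤ V q1)) := by
  have hcontr := supLipschitzOn_slT (l1 := l1) (l2 := l2) (l3 := l3) (φ := φ)
    hB11 hB12 hB21 hB22 hrow1 hrow2 hρ0
  have hcont (V : ℝ → ℝ) (hV : ContinuousOn V (Icc 0 1)) :=
    continuousOn_slT (l1 := l1) (l2 := l2) (l3 := l3) (φ := φ) (ρ := ρ) hB11 hB12 hB21 hB22 hV
  have hanti (V : ℝ → ℝ) (hV : AntitoneOn V (Icc 0 1)) :=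
    antitoneOn_slT (l3 := l3) (φ := φ) hB11 hB12 hB21 hB22 hrow1 hrow2 hA1
      (add_pos hl1 hl2).le hρ0 hV
  obtain ⟨K, hK⟩ := isCompact_Icc.exists_bound_of_continuousOn (hcont 0 continuousOn_const)
  obtain ⟨V, hVc, hVa, hVfix⟩ :=
    hcontr.exists_continuous_antitone_fixedPoint zero_le_one hρ0 hρ1 hcont hanti
  obtain ⟨M, hM⟩ := isCompact_Icc.exists_bound_of_continuousOn hVc.continuousOn
  exact ⟨fun W hW => hcontr.exists_bound ⟨K, hK⟩ hW, hcont, hcontr, V, ⟨M, hM⟩, hVfix,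
    fun W hW hWfix => hcontr.eqOn_of_isFixedPt hρ0 hρ1 hW ⟨M, hM⟩ hWfix hVfix,
    hVc.continuousOn, fun _ _ _ h _ => hVa h⟩

/-- the Bellman operator `T` maps functions bounded on `[0,1]` to functions
bounded on `[0,1]`, maps functions continuous on `[0,1]` to functions continuous on `[0,1]`,
and is a `ρ`-contraction in the supremum norm over `[0,1]`; hence it has a (bounded)
fixed point `V` on `[0,1]`, unique among bounded functions, which is continuous and,
under (A1) and `l1, l2, l3 > 0`, nonincreasing on `[0,1]`. -/
theorem stmt11
    (B11 B12 B21 B22 l1 l2 l3 φ ρ : ℝ)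
    (hB11 : 0 < B11) (hB12 : 0 < B12) (hB21 : 0 < B21) (hB22 : 0 < B22)
    (hrow1 : B11 + B12 = 1) (hrow2 : B21 + B22 = 1)
    (hA1 : B11 * B22 - B12 * B21 ≥ 0)
    (hl1 : 0 < l1) (hl2 : 0 < l2) (hl3 : 0 < l3)
    (hφ0 : 0 < φ) (hφ1 : φ < 1) (hρ0 : 0 ≤ ρ) (hρ1 : ρ < 1) :
    -- bounded to bounded
    (∀ V : ℝ → ℝ, (∃ M, ∀ q ∈ Set.Icc (0:ℝ) 1, |V q| ≤ M) →
      ∃ M, ∀ q ∈ Set.Icc (0:ℝ) 1, |slT B11 B12 B21 B22 l1 l2 l3 φ ρ V q| ≤ M) ∧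
    -- continuous to continuous
    (∀ V : ℝ → ℝ, ContinuousOn V (Set.Icc (0:ℝ) 1) →
      ContinuousOn (slT B11 B12 B21 B22 l1 l2 l3 φ ρ V) (Set.Icc (0:ℝ) 1)) ∧
    -- contraction with Lipschitz constant ρ in the sup norm over [0,1]
    (∀ V W : ℝ → ℝ, ∀ C : ℝ, (∀ q ∈ Set.Icc (0:ℝ) 1, |V q - W q| ≤ C) →
      ∀ q ∈ Set.Icc (0:ℝ) 1,
        |slT B11 B12 B21 B22 l1 l2 l3 φ ρ V q - slT B11 B12 B21 B22 l1 l2 l3 φ ρ W q| ≤ ρ * C) ∧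
    -- existence of a bounded fixed point, unique among bounded functions, continuous,
    -- and nonincreasing on [0,1]
    (∃ V : ℝ → ℝ,
      (∃ M, ∀ q ∈ Set.Icc (0:ℝ) 1, |V q| ≤ M) ∧
      (∀ q ∈ Set.Icc (0:ℝ) 1, slT B11 B12 B21 B22 l1 l2 l3 φ ρ V q = V q) ∧
      (∀ W : ℝ → ℝ, (∃ M, ∀ q ∈ Set.Icc (0:ℝ) 1, |W q| ≤ M) →
        (∀ q ∈ Set.Icc (0:ℝ) 1, slT B11 B12 B21 B22 l1 l2 l3 φ ρ W q = W q) →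
        ∀ q ∈ Set.Icc (0:ℝ) 1, W q = V q) ∧
      ContinuousOn V (Set.Icc (0:ℝ) 1) ∧
      (∀ q1 q2 : ℝ, 0 ≤ q1 → q1 ≤ q2 → q2 ≤ 1 → V q2 ≤ V q1)) :=
  stmt11_general B11 B12 B21 B22 l1 l2 l3 φ ρ hB11 hB12 hB21 hB22 hrow1 hrow2 hA1 hl1 hl2 hρ0 hρ1
end

section
/- Optimality of a threshold incentive policy: assume (A1), l1, l2, l3 > 0, and l3 − l2 < φ < l1 + l3 (i.e. Δ_2(1) < φ < Δ_2(0)). Let V be the unique bounded fixed point of the Bellman operator T. Then there exists a threshold q* ∈ (0,1) such that V(q) = 0 for all q ∈ [0, q*), and V(q) = Δ_2(q) − φ + ρ(σ_1(q) V(η_1(q)) + σ_2(q) V(η_2(q))) < 0 for all q ∈ (q*, 1]. Consequently the optimal incentive policy is μ*(q) = 0 for q below the threshold and μ*(q) = Δ_2(q) above it. -/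
/-- Auxiliary: the expression inside the `min` of the Bellman operator. -/
noncomputable def slW (B11 B12 B21 B22 l1 l2 l3 φ ρ : ℝ) (f : ℝ → ℝ) (q : ℝ) : ℝ :=
  slDelta l1 l2 l3 B12 B22 q - φ +
    ρ * (slSig B11 B21 q * f (slEta B11 B21 q) + slSig B12 B22 q * f (slEta B12 B22 q))

lemma sl_sig_pos {b1 b2 q : ℝ} (h1 : 0 < b1) (h2 : 0 < b2) (h0 : 0 ≤ q) (hq1 : q ≤ 1) :
    0 < slSig b1 b2 q := by
  unfold slSig; rcases le_total b1 b2 with h | h <;> nlinarith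

lemma sl_eta_nonneg {b1 b2 q : ℝ} (h1 : 0 < b1) (h2 : 0 < b2) (h0 : 0 ≤ q) (hq1 : q ≤ 1) :
    0 ≤ slEta b1 b2 q :=
  div_nonneg (by positivity) (sl_sig_pos h1 h2 h0 hq1).le

lemma sl_eta_le_one {b1 b2 q : ℝ} (h1 : 0 < b1) (h2 : 0 < b2) (h0 : 0 ≤ q) (hq1 : q ≤ 1) :
    slEta b1 b2 q ≤ 1 := by
  rw [slEta, div_le_one (sl_sig_pos h1 h2 h0 hq1)]; unfold slSig; nlinarith

lemma sl_eta_mem {b1 b2 q : ℝ} (h1 : 0 < b1) (h2 : 0 < b2) (h0 : 0 ≤ q) (hq1 : q ≤ 1) :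
    slEta b1 b2 q ∈ Set.Icc (0:ℝ) 1 :=
  ⟨sl_eta_nonneg h1 h2 h0 hq1, sl_eta_le_one h1 h2 h0 hq1⟩

lemma sl_eta_mono {b1 b2 q q' : ℝ} (h1 : 0 < b1) (h2 : 0 < b2) (h0 : 0 ≤ q) (hqq : q ≤ q')
    (hq1 : q' ≤ 1) : slEta b1 b2 q ≤ slEta b1 b2 q' := by
  rw [slEta, slEta, div_le_div_iff₀ (sl_sig_pos h1 h2 h0 (le_trans hqq hq1))
    (sl_sig_pos h1 h2 (le_trans h0 hqq) hq1)]
  unfold slSig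
  nlinarith [mul_nonneg (mul_pos h1 h2).le (sub_nonneg.mpr hqq)]

lemma sl_sig_mul_eta {b1 b2 q : ℝ} (h1 : 0 < b1) (h2 : 0 < b2) (h0 : 0 ≤ q) (hq1 : q ≤ 1) :
    slSig b1 b2 q * slEta b1 b2 q = b2 * q := by
  rw [slEta, mul_div_cancel₀ _ (sl_sig_pos h1 h2 h0 hq1).ne']

lemma sl_min_lip (a b : ℝ) : |min 0 a - min 0 b| ≤ |a - b| := by
  have h1 : a - b ≤ |a - b| := le_abs_self _
  have h2 : b - a ≤ |a - b| := by rw [abs_sub_comm]; exact le_abs_self _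
  rw [abs_le]
  constructor <;> rcases le_total a 0 with ha | ha <;> rcases le_total b 0 with hb | hb <;>
    simp [min_eq_left, min_eq_right, ha, hb] <;> linarith

lemma sl_eta1_le_eta2 {B11 B12 B21 B22 q : ℝ}
    (hB11 : 0 < B11) (hB12 : 0 < B12) (hB21 : 0 < B21) (hB22 : 0 < B22)
    (hA1 : B11 * B22 - B12 * B21 ≥ 0) (h0 : 0 ≤ q) (h1 : q ≤ 1) :
    slEta B11 B21 q ≤ slEta B12 B22 q := by
  rw [slEta, slEta, div_le_div_iff₀ (sl_sig_pos hB11 hB21 h0 h1) (sl_sig_pos hB12 hB22 h0 h1)]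
  unfold slSig
  nlinarith [mul_nonneg (mul_nonneg h0 (sub_nonneg.mpr h1)) hA1]

lemma sl_eta2_le {B12 B22 q : ℝ} (hB12 : 0 < B12) (hB22 : 0 < B22) (hB : B12 ≤ B22)
    (h0 : 0 ≤ q) (h1 : q ≤ 1) : slEta B12 B22 q ≤ (B22 / B12) * q := by
  have hσ := sl_sig_pos hB12 hB22 h0 h1
  rw [slEta, div_le_iff₀ hσ]
  have hσB : B12 ≤ slSig B12 B22 q := by
    unfold slSig; nlinarith [mul_nonneg (sub_nonneg.mpr hB) h0]
  have hCq : 0 ≤ (B22 / B12) * q := mul_nonneg (div_nonneg hB22.le hB12.le) h0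
  calc B22 * q = (B22 / B12) * q * B12 := by field_simp
    _ ≤ (B22 / B12) * q * slSig B12 B22 q := mul_le_mul_of_nonneg_left hσB hCq

lemma sl_le_eta2 {B12 B22 q : ℝ} (hB12 : 0 < B12) (hB22 : 0 < B22) (hB : B12 ≤ B22)
    (h0 : 0 ≤ q) (h1 : q ≤ 1) : q ≤ slEta B12 B22 q := by
  have hσ := sl_sig_pos hB12 hB22 h0 h1
  rw [slEta, le_div_iff₀ hσ]
  unfold slSig
  nlinarith [mul_nonneg h0 (mul_nonneg (sub_nonneg.mpr hB) (sub_nonneg.mpr h1))]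

lemma sl_sig_sum {B11 B12 B21 B22 q : ℝ} (hrow1 : B11 + B12 = 1) (hrow2 : B21 + B22 = 1) :
    slSig B11 B21 q + slSig B12 B22 q = 1 := by
  unfold slSig; linear_combination (1 - q) * hrow1 + q * hrow2

lemma sl_exp_anti {ρ s1 s2 t1 t2 u1 u2 v1 v2 : ℝ} (hρ : 0 ≤ ρ) (ht1 : 0 ≤ t1) (ht2 : 0 ≤ t2)
    (hsum1 : s1 + s2 = 1) (hsum2 : t1 + t2 = 1) (hs : s2 ≤ t2)
    (h1 : v1 ≤ u1) (h2 : v2 ≤ u2) (h12 : u2 ≤ u1) :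
    ρ * (t1 * v1 + t2 * v2) ≤ ρ * (s1 * u1 + s2 * u2) := by
  have e1 : s1 = 1 - s2 := by linarith
  have e2 : t1 = 1 - t2 := by linarith
  subst e1; subst e2
  nlinarith [mul_nonneg hρ (mul_nonneg ht1 (sub_nonneg.mpr h1)),
    mul_nonneg hρ (mul_nonneg ht2 (sub_nonneg.mpr h2)),
    mul_nonneg hρ (mul_nonneg (sub_nonneg.mpr hs) (sub_nonneg.mpr h12))]

lemma slT_contract (B11 B12 B21 B22 l1 l2 l3 φ ρ : ℝ)
    (hB11 : 0 < B11) (hB12 : 0 < B12) (hB21 : 0 < B21) (hB22 : 0 < B22)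
    (hrow1 : B11 + B12 = 1) (hrow2 : B21 + B22 = 1) (hρ0 : 0 ≤ ρ)
    (g h : ℝ → ℝ) (d : ℝ) (hd : ∀ r ∈ Set.Icc (0:ℝ) 1, |g r - h r| ≤ d)
    (q : ℝ) (h0 : 0 ≤ q) (h1 : q ≤ 1) :
    |slT B11 B12 B21 B22 l1 l2 l3 φ ρ g q - slT B11 B12 B21 B22 l1 l2 l3 φ ρ h q| ≤ ρ * d := by
  have hσ1 := sl_sig_pos hB11 hB21 h0 h1
  have hσ2 := sl_sig_pos hB12 hB22 h0 h1
  have e1m := sl_eta_mem hB11 hB21 h0 h1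
  have e2m := sl_eta_mem hB12 hB22 h0 h1
  have key : slW B11 B12 B21 B22 l1 l2 l3 φ ρ g q - slW B11 B12 B21 B22 l1 l2 l3 φ ρ h q =
      ρ * (slSig B11 B21 q * (g (slEta B11 B21 q) - h (slEta B11 B21 q)) +
        slSig B12 B22 q * (g (slEta B12 B22 q) - h (slEta B12 B22 q))) := by
    unfold slW; ring
  calc |slT B11 B12 B21 B22 l1 l2 l3 φ ρ g q - slT B11 B12 B21 B22 l1 l2 l3 φ ρ h q|
      = |min 0 (slW B11 B12 B21 B22 l1 l2 l3 φ ρ g q) -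
          min 0 (slW B11 B12 B21 B22 l1 l2 l3 φ ρ h q)| := rfl
    _ ≤ |slW B11 B12 B21 B22 l1 l2 l3 φ ρ g q - slW B11 B12 B21 B22 l1 l2 l3 φ ρ h q| :=
        sl_min_lip _ _
    _ ≤ ρ * d := by
        rw [key, abs_mul, abs_of_nonneg hρ0]
        have hb : |slSig B11 B21 q * (g (slEta B11 B21 q) - h (slEta B11 B21 q)) +
            slSig B12 B22 q * (g (slEta B12 B22 q) - h (slEta B12 B22 q))| ≤
            slSig B11 B21 q * d + slSig B12 B22 q * d := by
          refine (abs_add_le _ _).trans ?_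
          rw [abs_mul, abs_mul, abs_of_pos hσ1, abs_of_pos hσ2]
          exact add_le_add (mul_le_mul_of_nonneg_left (hd _ e1m) hσ1.le)
            (mul_le_mul_of_nonneg_left (hd _ e2m) hσ2.le)
        have hs : slSig B11 B21 q * d + slSig B12 B22 q * d = d := by
          linear_combination d * sl_sig_sum (q := q) hrow1 hrow2
        exact mul_le_mul_of_nonneg_left (hs ▸ hb) hρ0

lemma slT_anti (B11 B12 B21 B22 l1 l2 l3 φ ρ : ℝ)
    (hB11 : 0 < B11) (hB12 : 0 < B12) (hB21 : 0 < B21) (hB22 : 0 < B22)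
    (hrow1 : B11 + B12 = 1) (hrow2 : B21 + B22 = 1)
    (hA1 : B11 * B22 - B12 * B21 ≥ 0) (hB : B12 ≤ B22)
    (hl12 : 0 < l1 + l2) (hρ0 : 0 ≤ ρ)
    (g : ℝ → ℝ) (hg : ∀ x ∈ Set.Icc (0:ℝ) 1, ∀ y ∈ Set.Icc (0:ℝ) 1, x ≤ y → g y ≤ g x)
    (a : ℝ) (ha : a ∈ Set.Icc (0:ℝ) 1) (b : ℝ) (hb : b ∈ Set.Icc (0:ℝ) 1) (hab : a ≤ b) :
    slT B11 B12 B21 B22 l1 l2 l3 φ ρ g b ≤ slT B11 B12 B21 B22 l1 l2 l3 φ ρ g a := by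
  obtain ⟨ha0, ha1⟩ := ha
  obtain ⟨hb0, hb1⟩ := hb
  have e1ma := sl_eta_mem hB11 hB21 ha0 ha1
  have e2ma := sl_eta_mem hB12 hB22 ha0 ha1
  have e1mb := sl_eta_mem hB11 hB21 hb0 hb1
  have e2mb := sl_eta_mem hB12 hB22 hb0 hb1
  have hΔ : slDelta l1 l2 l3 B12 B22 b ≤ slDelta l1 l2 l3 B12 B22 a := by
    have := sl_eta_mono hB12 hB22 ha0 hab hb1
    unfold slDelta; nlinarith
  have hexp := sl_exp_anti (ρ := ρ)
    (s1 := slSig B11 B21 a) (s2 := slSig B12 B22 a)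
    (t1 := slSig B11 B21 b) (t2 := slSig B12 B22 b)
    (u1 := g (slEta B11 B21 a)) (u2 := g (slEta B12 B22 a))
    (v1 := g (slEta B11 B21 b)) (v2 := g (slEta B12 B22 b))
    hρ0 (sl_sig_pos hB11 hB21 hb0 hb1).le (sl_sig_pos hB12 hB22 hb0 hb1).le
    (sl_sig_sum hrow1 hrow2) (sl_sig_sum hrow1 hrow2)
    (by unfold slSig; nlinarith [mul_nonneg (sub_nonneg.mpr hB) (sub_nonneg.mpr hab)])
    (hg _ e1ma _ e1mb (sl_eta_mono hB11 hB21 ha0 hab hb1))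
    (hg _ e2ma _ e2mb (sl_eta_mono hB12 hB22 ha0 hab hb1))
    (hg _ e1ma _ e2ma (sl_eta1_le_eta2 hB11 hB12 hB21 hB22 hA1 ha0 ha1))
  show min 0 (slW B11 B12 B21 B22 l1 l2 l3 φ ρ g b) ≤
    min 0 (slW B11 B12 B21 B22 l1 l2 l3 φ ρ g a)
  refine min_le_min le_rfl ?_
  unfold slW
  linarith [hΔ, hexp]

lemma slW_lb (B11 B12 B21 B22 l1 l2 l3 φ ρ A : ℝ)
    (hB11 : 0 < B11) (hB12 : 0 < B12) (hB21 : 0 < B21) (hB22 : 0 < B22)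
    (hrow2 : B21 + B22 = 1) (hB : B12 ≤ B22) (hρ0 : 0 ≤ ρ) (hl12 : 0 < l1 + l2)
    (g : ℝ → ℝ) (hg : ∀ r ∈ Set.Icc (0:ℝ) 1, -A * r ≤ g r)
    (q : ℝ) (h0 : 0 ≤ q) (h1 : q ≤ 1) :
    l1 + l3 - φ - (l1 + l2) * (B22 / B12) * q - ρ * (A * q) ≤
      slW B11 B12 B21 B22 l1 l2 l3 φ ρ g q := by
  have hσ1 := sl_sig_pos hB11 hB21 h0 h1
  have hσ2 := sl_sig_pos hB12 hB22 h0 h1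
  have e1m := sl_eta_mem hB11 hB21 h0 h1
  have e2m := sl_eta_mem hB12 hB22 h0 h1
  have hmart : slSig B11 B21 q * slEta B11 B21 q + slSig B12 B22 q * slEta B12 B22 q = q := by
    rw [sl_sig_mul_eta hB11 hB21 h0 h1, sl_sig_mul_eta hB12 hB22 h0 h1]
    linear_combination q * hrow2
  have h1' := mul_le_mul_of_nonneg_left (hg _ e1m) hσ1.le
  have h2' := mul_le_mul_of_nonneg_left (hg _ e2m) hσ2.le
  have hm2 : -A * q = slSig B11 B21 q * (-A * slEta B11 B21 q) +
      slSig B12 B22 q * (-A * slEta B12 B22 q) := by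
    linear_combination A * hmart
  have hS : -A * q ≤ slSig B11 B21 q * g (slEta B11 B21 q) +
      slSig B12 B22 q * g (slEta B12 B22 q) := by linarith [h1', h2', hm2]
  have hEρ := mul_le_mul_of_nonneg_left hS hρ0
  have he2le := sl_eta2_le hB12 hB22 hB h0 h1
  unfold slW slDelta
  nlinarith [mul_le_mul_of_nonneg_left he2le hl12.le, hEρ]

/-- optimality of a threshold incentive policy. Under (A1),
`l1, l2, l3 > 0` and `Δ_2(1) = l3 − l2 < φ < l1 + l3 = Δ_2(0)`, any bounded fixed point
`V` of the Bellman operator admits a threshold `q* ∈ (0,1)` with `V = 0` below `q*` and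
`V(q) = Δ_2(q) − φ + ρ(σ_1(q) V(η_1(q)) + σ_2(q) V(η_2(q))) < 0` above `q*`; i.e. the
optimal incentive policy is `μ*(q) = 0` below the threshold and `μ*(q) = Δ_2(q)` above. -/
theorem stmt12
    (B11 B12 B21 B22 l1 l2 l3 φ ρ : ℝ)
    (hB11 : 0 < B11) (hB12 : 0 < B12) (hB21 : 0 < B21) (hB22 : 0 < B22)
    (hrow1 : B11 + B12 = 1) (hrow2 : B21 + B22 = 1)
    (hA1 : B11 * B22 - B12 * B21 ≥ 0)
    (hl1 : 0 < l1) (hl2 : 0 < l2) (hl3 : 0 < l3)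
    (hφ0 : 0 < φ) (hφ1 : φ < 1) (hρ0 : 0 ≤ ρ) (hρ1 : ρ < 1)
    (hφlo : l3 - l2 < φ) (hφhi : φ < l1 + l3)
    (V : ℝ → ℝ)
    (hVbdd : ∃ M, ∀ q ∈ Set.Icc (0:ℝ) 1, |V q| ≤ M)
    (hVfix : ∀ q ∈ Set.Icc (0:ℝ) 1, V q = slT B11 B12 B21 B22 l1 l2 l3 φ ρ V q) :
    ∃ qs ∈ Set.Ioo (0:ℝ) 1,
      (∀ q : ℝ, 0 ≤ q → q < qs → V q = 0) ∧
      (∀ q : ℝ, qs < q → q ≤ 1 →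
        V q = slDelta l1 l2 l3 B12 B22 q - φ +
            ρ * (slSig B11 B21 q * V (slEta B11 B21 q) +
              slSig B12 B22 q * V (slEta B12 B22 q)) ∧
        V q < 0) := by
  obtain ⟨M, hM⟩ := hVbdd
  have hM0 : 0 ≤ M := (abs_nonneg _).trans (hM 0 ⟨le_refl 0, zero_le_one⟩)
  have hl12 : 0 < l1 + l2 := by linarith
  have hB : B12 ≤ B22 := by
    have e1 : B11 = 1 - B12 := by linarith
    have e2 : B21 = 1 - B22 := by linarith
    rw [e1, e2] at hA1; nlinarith [hA1]
  have h1ρ : 0 < 1 - ρ := by linarith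
  obtain ⟨A, hA0, hAid⟩ : ∃ A : ℝ, 0 ≤ A ∧ A * (1 - ρ) = (l1 + l2) * (B22 / B12) :=
    ⟨(l1 + l2) * (B22 / B12) / (1 - ρ), by positivity, by field_simp⟩
  -- the value iteration sequence
  obtain ⟨F, hF0, hFs⟩ : ∃ F : ℕ → ℝ → ℝ, (∀ q, F 0 q = 0) ∧
      ∀ n, F (n + 1) = slT B11 B12 B21 B22 l1 l2 l3 φ ρ (F n) :=
    ⟨fun n => (slT B11 B12 B21 B22 l1 l2 l3 φ ρ)^[n] (fun _ => 0), fun q => rfl,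
      fun n => Function.iterate_succ_apply' _ _ _⟩
  have hP : ∀ n : ℕ, (∀ q ∈ Set.Icc (0:ℝ) 1, |F n q - V q| ≤ ρ ^ n * M) ∧
      (∀ q ∈ Set.Icc (0:ℝ) 1, -A * q ≤ F n q) ∧
      (∀ x ∈ Set.Icc (0:ℝ) 1, ∀ y ∈ Set.Icc (0:ℝ) 1, x ≤ y → F n y ≤ F n x) := by
    intro n
    induction n with
    | zero =>
      refine ⟨fun q hq => ?_, fun q hq => ?_, fun x hx y hy hxy => ?_⟩
      · rw [hF0, zero_sub, abs_neg, pow_zero, one_mul]; exact hM q hq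
      · rw [hF0]; nlinarith [mul_nonneg hA0 hq.1]
      · rw [hF0, hF0]
    | succ n ih =>
      obtain ⟨ih1, ih2, ih3⟩ := ih
      refine ⟨fun q hq => ?_, fun q hq => ?_, fun x hx y hy hxy => ?_⟩
      · rw [hFs]
        have hTV : slT B11 B12 B21 B22 l1 l2 l3 φ ρ V q = V q := (hVfix q hq).symm
        calc |slT B11 B12 B21 B22 l1 l2 l3 φ ρ (F n) q - V q|
            = |slT B11 B12 B21 B22 l1 l2 l3 φ ρ (F n) q -
                slT B11 B12 B21 B22 l1 l2 l3 φ ρ V q| := by rw [hTV]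
          _ ≤ ρ * (ρ ^ n * M) := slT_contract B11 B12 B21 B22 l1 l2 l3 φ ρ hB11 hB12 hB21 hB22
              hrow1 hrow2 hρ0 (F n) V (ρ ^ n * M) ih1 q hq.1 hq.2
          _ = ρ ^ (n + 1) * M := by ring
      · rw [hFs]
        show -A * q ≤ min 0 (slW B11 B12 B21 B22 l1 l2 l3 φ ρ (F n) q)
        have hlb := slW_lb B11 B12 B21 B22 l1 l2 l3 φ ρ A hB11 hB12 hB21 hB22 hrow2 hB hρ0
          hl12 (F n) ih2 q hq.1 hq.2
        have hAidq : q * (A * (1 - ρ)) = q * ((l1 + l2) * (B22 / B12)) := by rw [hAid]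
        refine le_min (by nlinarith [mul_nonneg hA0 hq.1]) ?_
        nlinarith [hlb, hAidq, hq.1, hφhi]
      · rw [hFs]
        exact slT_anti B11 B12 B21 B22 l1 l2 l3 φ ρ hB11 hB12 hB21 hB22 hrow1 hrow2 hA1 hB
          hl12 hρ0 (F n) ih3 x hx y hy hxy
  -- limit facts about V
  have hpow : Filter.Tendsto (fun n : ℕ => ρ ^ n * M) Filter.atTop (nhds 0) := by
    simpa using (tendsto_pow_atTop_nhds_zero_of_lt_one hρ0 hρ1).mul_const M
  have hVlb : ∀ q ∈ Set.Icc (0:ℝ) 1, -A * q ≤ V q := by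
    intro q hq
    have hn : ∀ n : ℕ, -A * q - ρ ^ n * M ≤ V q := by
      intro n
      have h1 := (abs_le.mp ((hP n).1 q hq)).2
      have h2 := (hP n).2.1 q hq
      linarith
    have hlim : Filter.Tendsto (fun n : ℕ => -A * q - ρ ^ n * M) Filter.atTop
        (nhds (-A * q)) := by simpa using tendsto_const_nhds.sub hpow
    exact le_of_tendsto' hlim hn
  have hVanti : ∀ x ∈ Set.Icc (0:ℝ) 1, ∀ y ∈ Set.Icc (0:ℝ) 1, x ≤ y → V y ≤ V x := by
    intro x hx y hy hxy
    have hn : ∀ n : ℕ, V y ≤ V x + 2 * (ρ ^ n * M) := by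
      intro n
      have h1 := (abs_le.mp ((hP n).1 y hy)).1
      have h2 := (abs_le.mp ((hP n).1 x hx)).2
      have h3 := (hP n).2.2 x hx y hy hxy
      linarith
    have hlim : Filter.Tendsto (fun n : ℕ => V x + 2 * (ρ ^ n * M)) Filter.atTop
        (nhds (V x)) := by simpa using tendsto_const_nhds.add (hpow.const_mul 2)
    exact ge_of_tendsto' hlim hn
  have hVle0 : ∀ q ∈ Set.Icc (0:ℝ) 1, V q ≤ 0 := by
    intro q hq
    rw [hVfix q hq]
    exact min_le_left _ _
  have hWV : ∀ q ∈ Set.Icc (0:ℝ) 1,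
      V q = min 0 (slW B11 B12 B21 B22 l1 l2 l3 φ ρ V q) := fun q hq => hVfix q hq
  -- the low region
  obtain ⟨D, hD, hDexp⟩ : ∃ D : ℝ, 0 < D ∧ D = (l1 + l2) * (B22 / B12) + ρ * A + 1 :=
    ⟨(l1 + l2) * (B22 / B12) + ρ * A + 1, by positivity, rfl⟩
  obtain ⟨δ, hδpos, hδ1, hδD⟩ : ∃ δ : ℝ, 0 < δ ∧ δ ≤ 1 ∧ D * δ ≤ l1 + l3 - φ := by
    refine ⟨min ((l1 + l3 - φ) / D) 1, lt_min (div_pos (by linarith) hD) one_pos,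
      min_le_right _ _, ?_⟩
    calc D * min ((l1 + l3 - φ) / D) 1 ≤ D * ((l1 + l3 - φ) / D) :=
          mul_le_mul_of_nonneg_left (min_le_left _ _) hD.le
      _ = l1 + l3 - φ := by field_simp
  have hlow : ∀ q : ℝ, 0 ≤ q → q < δ → V q = 0 := by
    intro q h0 hqδ
    have h1 : q ≤ 1 := le_of_lt (lt_of_lt_of_le hqδ hδ1)
    have hq : q ∈ Set.Icc (0:ℝ) 1 := ⟨h0, h1⟩
    have hlb := slW_lb B11 B12 B21 B22 l1 l2 l3 φ ρ A hB11 hB12 hB21 hB22 hrow2 hB hρ0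
      hl12 V hVlb q h0 h1
    have hqD : D * q < l1 + l3 - φ :=
      lt_of_lt_of_le (mul_lt_mul_of_pos_left hqδ hD) hδD
    have hDqq : D * q = ((l1 + l2) * (B22 / B12) + ρ * A + 1) * q := by rw [hDexp]
    have hWpos : 0 ≤ slW B11 B12 B21 B22 l1 l2 l3 φ ρ V q := by
      nlinarith [hlb, hqD, hDqq, h0]
    rw [hWV q hq, min_eq_left hWpos]
  -- the upper bound on the zero set
  have hhigh : ∀ r ∈ Set.Icc (0:ℝ) 1, V r = 0 → (l1 + l2) * r ≤ l1 + l3 - φ := by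
    intro r hr hVr
    have h2 := hWV r hr
    rw [hVr] at h2
    have hWnn : 0 ≤ slW B11 B12 B21 B22 l1 l2 l3 φ ρ V r := by
      by_contra hneg
      push_neg at hneg
      rw [min_eq_right hneg.le] at h2
      exact absurd h2.symm (ne_of_lt hneg)
    have e1m := sl_eta_mem hB11 hB21 hr.1 hr.2
    have e2m := sl_eta_mem hB12 hB22 hr.1 hr.2
    have hσ1 := sl_sig_pos hB11 hB21 hr.1 hr.2
    have hσ2 := sl_sig_pos hB12 hB22 hr.1 hr.2
    have hE1 : slSig B11 B21 r * V (slEta B11 B21 r) ≤ 0 :=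
      mul_nonpos_iff.mpr (Or.inl ⟨hσ1.le, hVle0 _ e1m⟩)
    have hE2 : slSig B12 B22 r * V (slEta B12 B22 r) ≤ 0 :=
      mul_nonpos_iff.mpr (Or.inl ⟨hσ2.le, hVle0 _ e2m⟩)
    have hρE : ρ * (slSig B11 B21 r * V (slEta B11 B21 r) +
        slSig B12 B22 r * V (slEta B12 B22 r)) ≤ 0 :=
      mul_nonpos_iff.mpr (Or.inl ⟨hρ0, by linarith⟩)
    have hle2 := sl_le_eta2 hB12 hB22 hB hr.1 hr.2
    unfold slW slDelta at hWnn
    linarith [mul_le_mul_of_nonneg_left hle2 hl12.le, hWnn, hρE]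
  -- the threshold
  obtain ⟨Z, hZmem⟩ : ∃ Z : Set ℝ, ∀ x : ℝ, x ∈ Z ↔ (x ∈ Set.Icc (0:ℝ) 1 ∧ V x = 0) :=
    ⟨{x | x ∈ Set.Icc (0:ℝ) 1 ∧ V x = 0}, fun x => Iff.rfl⟩
  have h0Z : (0:ℝ) ∈ Z := (hZmem 0).mpr ⟨⟨le_refl 0, zero_le_one⟩, hlow 0 le_rfl hδpos⟩
  have hZne : Z.Nonempty := ⟨0, h0Z⟩
  have hZub : ∀ z ∈ Z, z ≤ (l1 + l3 - φ) / (l1 + l2) := by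
    intro z hz
    rw [hZmem] at hz
    rw [le_div_iff₀ hl12]
    linarith [hhigh z hz.1 hz.2]
  have hZbdd : BddAbove Z := ⟨_, hZub⟩
  have hmemδ : δ / 2 ∈ Z :=
    (hZmem _).mpr ⟨⟨by linarith, by linarith⟩, hlow _ (by linarith) (by linarith)⟩
  refine ⟨sSup Z, ⟨?_, ?_⟩, ?_, ?_⟩
  · linarith [le_csSup hZbdd hmemδ]
  · exact lt_of_le_of_lt (csSup_le hZne hZub) ((div_lt_one hl12).mpr (by linarith))
  · intro q h0 hq
    obtain ⟨r, hrZ, hqr⟩ := exists_lt_of_lt_csSup hZne hq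
    rw [hZmem] at hrZ
    have hVrq := hVanti q ⟨h0, le_trans hqr.le hrZ.1.2⟩ r hrZ.1 hqr.le
    have := hVle0 q ⟨h0, le_trans hqr.le hrZ.1.2⟩
    rw [hrZ.2] at hVrq
    linarith
  · intro q hq hq1
    have h0q : (0:ℝ) ≤ q := by linarith [le_csSup hZbdd hmemδ]
    have hqIcc : q ∈ Set.Icc (0:ℝ) 1 := ⟨h0q, hq1⟩
    have hVneg : V q < 0 := by
      rcases lt_or_eq_of_le (hVle0 q hqIcc) with h | h
      · exact h
      · exfalso
        have hqZ : q ∈ Z := (hZmem q).mpr ⟨hqIcc, h⟩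
        linarith [le_csSup hZbdd hqZ]
    refine ⟨?_, hVneg⟩
    have h2 := hWV q hqIcc
    rcases le_or_gt 0 (slW B11 B12 B21 B22 l1 l2 l3 φ ρ V q) with hc | hc
    · rw [min_eq_left hc] at h2
      exact absurd h2 (ne_of_lt hVneg)
    · rw [min_eq_right hc.le] at h2
      exact h2
end
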